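/- Let n ≥ 2 be an integer and ω = (n+1)·ω_{n+1}, where ω_{n+1} is the Lebesgue volume of the unit ball in ℝ^{n+1}. For 0 ≤ j ≤ n define g_j(ρ) = C(n,j)·ω·(cos ρ)^j·(sin ρ)^{n−j}, and define f_{−1}(ρ) = ω·∫_0^ρ (sin t)^n dt, f_0(ρ) = g_0(ρ), f_1(ρ) = g_1(ρ) + n·f_{−1}(ρ), and f_j(ρ) = g_j(ρ) + ((n−j+1)/(j−1))·f_{j−2}(ρ) for 2 ≤ j ≤ n. Then for every integer 1 ≤ k ≤ n, the function f_{k−1} is differentiable on (0, π/2) with f_{k−1}′(ρ) = k·g_k(ρ) > 0 for every ρ ∈ (0, π/2); in particular f_{k−1} is strictly increasing on (0, π/2). -/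

import Mathlib

open Real MeasureTheory

/-- `ballVol m` is the Lebesgue volume of the closed unit ball in `ℝ^m`. -/
noncomputable def ballVol (m : ℕ) : ℝ :=
  (volume (Metric.closedBall (0 : EuclideanSpace ℝ (Fin m)) 1)).toReal

/-- `g n ω j ρ = C(n,j)·ω·(cos ρ)^j·(sin ρ)^{n−j}`, the curvature integral
`∫_{∂B_ρ} σ_j` over the geodesic sphere of radius `ρ` in `S^{n+1}`. -/
noncomputable def gsph (n : ℕ) (ω : ℝ) (j : ℕ) (ρ : ℝ) : ℝ :=
  (n.choose j : ℝ) * ω * (Real.cos ρ) ^ j * (Real.sin ρ) ^ (n - j)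

/-- `Fq n ω k = f_{k−1}`, the quermassintegral `A_{k−1}(B_ρ)` of the geodesic ball:
`f_{−1}(ρ) = ω ∫_0^ρ sin^n`, `f_0 = g_0`, `f_1 = g_1 + n f_{−1}`,
`f_j = g_j + ((n−j+1)/(j−1)) f_{j−2}` for `2 ≤ j ≤ n`. -/
noncomputable def Fq (n : ℕ) (ω : ℝ) : ℕ → ℝ → ℝ
  | 0, ρ => ω * ∫ t in (0 : ℝ)..ρ, (Real.sin t) ^ n
  | 1, ρ => gsph n ω 0 ρ
  | 2, ρ => gsph n ω 1 ρ + n * Fq n ω 0 ρ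
  | (j + 3), ρ => gsph n ω (j + 2) ρ +
      (((n : ℝ) - ((j : ℝ) + 2) + 1) / (((j : ℝ) + 2) - 1)) * Fq n ω (j + 1) ρ

/-
Since `(j+1) C(n,j+1) = (n-j) C(n,j)`, we have `g_0' = g_1` and
`g_{j+1}' = (j+2) g_{j+2} - (n-j) g_j`, while `f_{-1}' = g_0`. In the recursion
`f_{j+2} = g_{j+2} + ((n-j-1)/(j+1)) f_j`, the term `-(n-j-1) g_{j+1}` of `g_{j+2}'` is then
cancelled by `((n-j-1)/(j+1)) f_j' = (n-j-1) g_{j+1}`, so `f_{k-1}' = k g_k` by induction on `k`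
in steps of two. Positivity of `g_k` on `(0, π/2)` gives the monotonicity.
-/

theorem ballVol_pos (m : ℕ) : 0 < ballVol m :=
  ENNReal.toReal_pos (Metric.measure_closedBall_pos volume _ one_pos).ne'
    measure_closedBall_lt_top.ne

section Derivatives

variable (n : ℕ) (ω : ℝ)

theorem gsph_zero_apply (ρ : ℝ) : gsph n ω 0 ρ = ω * sin ρ ^ n := by
  simp [gsph]

theorem gsph_zero_hasDerivAt (ρ : ℝ) : HasDerivAt (gsph n ω 0) (gsph n ω 1 ρ) ρ := by
  have h := ((hasDerivAt_sin ρ).pow n).const_mul ω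
  refine (h.congr_deriv ?_).congr_of_eventuallyEq (.of_forall (gsph_zero_apply n ω))
  simp only [gsph, Nat.choose_one_right, pow_one]
  ring

theorem gsph_succ_hasDerivAt {j : ℕ} (hj : j < n) (ρ : ℝ) :
    HasDerivAt (gsph n ω (j + 1))
      (((j : ℝ) + 2) * gsph n ω (j + 2) ρ - ((n : ℝ) - j) * gsph n ω j ρ) ρ := by
  have hdown : (n.choose (j + 1) : ℝ) * (j + 1) = n.choose j * ((n : ℝ) - j) := by
    have h := congrArg (Nat.cast (R := ℝ)) (Nat.choose_succ_right_eq n j)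
    push_cast [Nat.cast_sub hj.le] at h
    exact h
  have hup : (n.choose (j + 2) : ℝ) * (j + 2) = n.choose (j + 1) * ((n - (j + 1) : ℕ) : ℝ) := by
    exact_mod_cast Nat.choose_succ_right_eq n (j + 1)
  have hsin : sin ρ ^ (n - j) = sin ρ * sin ρ ^ (n - (j + 1)) := by
    rw [← pow_succ', show n - (j + 1) + 1 = n - j by omega]
  have hsub : n - (j + 1) - 1 = n - (j + 2) := by omega
  have h := (((hasDerivAt_cos ρ).pow (j + 1)).mul ((hasDerivAt_sin ρ).pow (n - (j + 1)))).const_mul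
    ((n.choose (j + 1) : ℝ) * ω)
  refine (h.congr_deriv ?_).congr_of_eventuallyEq (.of_forall fun x => by
    simp only [gsph, Pi.mul_apply, Pi.pow_apply]; ring)
  simp only [gsph, Pi.pow_apply, hsin, hsub, add_tsub_cancel_right]
  push_cast
  linear_combination (-ω * cos ρ ^ j * sin ρ ^ (n - (j + 1)) * sin ρ) * hdown
    - (ω * cos ρ ^ (j + 2) * sin ρ ^ (n - (j + 2))) * hup

theorem Fq_zero_hasDerivAt (ρ : ℝ) : HasDerivAt (Fq n ω 0) (gsph n ω 0 ρ) ρ := by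
  have hcont : Continuous fun t : ℝ => sin t ^ n := continuous_sin.pow n
  rw [gsph_zero_apply]
  exact (intervalIntegral.integral_hasDerivAt_right (hcont.intervalIntegrable _ _)
    hcont.aestronglyMeasurable.stronglyMeasurableAtFilter hcont.continuousAt).const_mul ω

theorem Fq_add_three_hasDerivAt {j : ℕ} (hj : j + 3 ≤ n) {ρ : ℝ}
    (ih : HasDerivAt (Fq n ω (j + 1)) (((j + 1 : ℕ) : ℝ) * gsph n ω (j + 1) ρ) ρ) :
    HasDerivAt (Fq n ω (j + 3)) (((j + 3 : ℕ) : ℝ) * gsph n ω (j + 3) ρ) ρ := by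
  have h := (gsph_succ_hasDerivAt n ω (j := j + 1) (by omega) ρ).add
    (ih.const_mul (((n : ℝ) - ((j : ℝ) + 2) + 1) / (((j : ℝ) + 2) - 1)))
  refine h.congr_deriv ?_
  have hj1 : (j : ℝ) + 2 - 1 ≠ 0 := by linarith [(j.cast_nonneg : (0 : ℝ) ≤ j)]
  push_cast
  field_simp
  ring

theorem Fq_hasDerivAt (ρ : ℝ) :
    ∀ {k : ℕ}, 1 ≤ k → k ≤ n → HasDerivAt (Fq n ω k) ((k : ℝ) * gsph n ω k ρ) ρ
  | 1, _, _ => by simpa [Fq] using gsph_zero_hasDerivAt n ω ρ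
  | 2, _, hk => by
    refine ((gsph_succ_hasDerivAt n ω (j := 0) (by omega) ρ).add
      ((Fq_zero_hasDerivAt n ω ρ).const_mul (n : ℝ))).congr_deriv ?_
    push_cast
    ring
  | j + 3, _, hk => Fq_add_three_hasDerivAt n ω hk (Fq_hasDerivAt ρ (by omega) (by omega))

end Derivatives

theorem gsph_pos {n k : ℕ} {ω ρ : ℝ} (hω : 0 < ω) (hk : k ≤ n) (hρ : ρ ∈ Set.Ioo 0 (π / 2)) :
    0 < gsph n ω k ρ := by
  have hcos : 0 < cos ρ := cos_pos_of_mem_Ioo ⟨by linarith [hρ.1, pi_pos], hρ.2⟩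
  have hsin : 0 < sin ρ := sin_pos_of_pos_of_lt_pi hρ.1 (by linarith [hρ.2, pi_pos])
  have hchoose : 0 < (n.choose k : ℝ) := by exact_mod_cast Nat.choose_pos hk
  unfold gsph
  positivity

theorem deriv_Fq_general (n k : ℕ) (hk1 : 1 ≤ k) (hk2 : k ≤ n) :
    (∀ ρ ∈ Set.Ioo 0 (π / 2),
      HasDerivAt (Fq n (((n : ℝ) + 1) * ballVol (n + 1)) k)
          ((k : ℝ) * gsph n (((n : ℝ) + 1) * ballVol (n + 1)) k ρ) ρ ∧
        0 < (k : ℝ) * gsph n (((n : ℝ) + 1) * ballVol (n + 1)) k ρ) ∧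
      StrictMonoOn (Fq n (((n : ℝ) + 1) * ballVol (n + 1)) k) (Set.Ioo 0 (π / 2)) := by
  set ω := ((n : ℝ) + 1) * ballVol (n + 1)
  have hω : 0 < ω := mul_pos (by positivity) (ballVol_pos _)
  have hder := fun ρ => Fq_hasDerivAt n ω ρ hk1 hk2
  have hpos : ∀ ρ ∈ Set.Ioo 0 (π / 2), 0 < (k : ℝ) * gsph n ω k ρ := fun ρ hρ =>
    mul_pos (by exact_mod_cast hk1) (gsph_pos hω hk2 hρ)
  refine ⟨fun ρ hρ => ⟨hder ρ, hpos ρ hρ⟩, ?_⟩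
  refine strictMonoOn_of_hasDerivWithinAt_pos (convex_Ioo _ _)
    (fun ρ _ => (hder ρ).continuousAt.continuousWithinAt) (fun ρ _ => (hder ρ).hasDerivWithinAt) ?_
  rw [interior_Ioo]
  exact hpos

/-- For `1 ≤ k ≤ n`, the quermassintegral profile `f_{k−1}` is differentiable on
`(0, π/2)` with `f_{k−1}'(ρ) = k g_k(ρ) > 0`; in particular `f_{k−1}` is strictly
increasing on `(0, π/2)`. -/
theorem deriv_Fq (n k : ℕ) (hn : 2 ≤ n) (hk1 : 1 ≤ k) (hk2 : k ≤ n) :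
    (∀ ρ ∈ Set.Ioo 0 (π / 2),
      HasDerivAt (Fq n (((n : ℝ) + 1) * ballVol (n + 1)) k)
          ((k : ℝ) * gsph n (((n : ℝ) + 1) * ballVol (n + 1)) k ρ) ρ ∧
        0 < (k : ℝ) * gsph n (((n : ℝ) + 1) * ballVol (n + 1)) k ρ) ∧
      StrictMonoOn (Fq n (((n : ℝ) + 1) * ballVol (n + 1)) k) (Set.Ioo 0 (π / 2)) :=
  deriv_Fq_general n k hk1 hk2
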